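/- Let s, w be complex numbers with Re(s) > 1 and Re(w) > 1/2. Then Σ_{l ≥ 1, l odd} l^{−2w} · Σ_{n ≥ 1, gcd(n, 2l) = 1} n^{−s} = ζ(s)·ζ(2w)·P(s, w), where P(s, w) = (1 − 2^{−s})(1 − 2^{−2w})·Π_{p odd prime} (1 − p^{−s−2w}). Equivalently, Σ_{m odd, m a perfect square} L(s, χ^{(4m)}) m^{−w} = ζ(s)·ζ(2w)·P(s, w), since for odd l the character χ^{(4l²)} is the principal character modulo 4l² and L(s, χ^{(4l²)}) = Σ_{gcd(n, 2l) = 1} n^{−s} = ζ(s)·Π_{p | 2l} (1 − p^{−s}). -/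

import Mathlib

/-!
For odd `l` the inner series is the L-series of the principal character modulo `2l`, namely
`ζ(s) (1 - 2^{-s}) ∏_{p ∣ l} (1 - p^{-s})`, and `∏_{p ∣ l} (1 - p^{-s}) = ∑_{d ∣ l} μ(d) d^{-s}`.
Hence the outer series is the Dirichlet series at `2w` of the convolution of `d ↦ μ(d) d^{-s}`
with `1`, both restricted to odd arguments. It factors as `∑_{d odd} μ(d) d^{-s-2w}`, which is
`∏_{p odd} (1 - p^{-s-2w})` by the Euler product, times `∑_{k odd} k^{-2w} = (1 - 2^{-2w}) ζ(2w)`.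
-/

open Complex

/-- The factor `P(s, w) = (1 − 2^{−s})(1 − 2^{−2w})·∏_{p odd prime} (1 − p^{−s−2w})`. -/
noncomputable def Pfactor (s w : ℂ) : ℂ :=
  (1 - (2 : ℂ) ^ (-s)) * (1 - (2 : ℂ) ^ (-(2 * w))) *
    ∏' p : {p : ℕ // p.Prime ∧ Odd p}, (1 - ((p : ℕ) : ℂ) ^ (-s - 2 * w))

open ArithmeticFunction LSeries
open scoped ArithmeticFunction.Moebius ArithmeticFunction.zeta LSeries.notation

lemma Nat.prod_primeFactors_prime_mul {M : Type*} [CommMonoid M] {p n : ℕ} (hp : p.Prime)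
    (hpn : ¬p ∣ n) (g : ℕ → M) :
    ∏ q ∈ (p * n).primeFactors, g q = g p * ∏ q ∈ n.primeFactors, g q := by
  have hcop : p.Coprime n := (Nat.Prime.coprime_iff_not_dvd hp).mpr hpn
  rw [hcop.primeFactors_mul, Finset.prod_union hcop.disjoint_primeFactors, hp.primeFactors,
    Finset.prod_singleton]

theorem ArithmeticFunction.IsMultiplicative.prodPrimeFactors_one_sub {R : Type*} [CommRing R]
    {f : ArithmeticFunction R} (hf : f.IsMultiplicative) {n : ℕ} (hn : n ≠ 0) :
    ∏ p ∈ n.primeFactors, (1 - f p) = ∑ d ∈ n.divisors, μ d * f d := by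
  set g : ArithmeticFunction R := (μ : ArithmeticFunction R).pmul f * (ζ : ArithmeticFunction R)
  have hg : g.IsMultiplicative :=
    (isMultiplicative_moebius.intCast.pmul hf).mul isMultiplicative_zeta.natCast
  have hg_apply (m : ℕ) : g m = ∑ d ∈ m.divisors, μ d * f d := by
    simp only [g, coe_mul_zeta_apply, pmul_apply, intCoe_apply]
  have hg_primePow (p k : ℕ) (hp : p.Prime) (hk : k ≠ 0) : g (p ^ k) = 1 - f p := by
    obtain ⟨k, rfl⟩ := Nat.exists_eq_succ_of_ne_zero hk
    have hhigher : ∑ i ∈ Finset.range k, (μ (p ^ (i + 1 + 1)) : R) * f (p ^ (i + 1 + 1)) = 0 :=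
      Finset.sum_eq_zero fun i _ => by
        rw [moebius_apply_prime_pow hp (by omega), if_neg (by omega), Int.cast_zero, zero_mul]
    rw [hg_apply, Nat.sum_divisors_prime_pow hp, Finset.sum_range_succ', Finset.sum_range_succ',
      hhigher, zero_add, pow_one, pow_zero, moebius_apply_prime hp, moebius_apply_one, hf.map_one]
    push_cast
    ring
  rw [← hg_apply, multiplicative_factorization g hg hn, Nat.prod_factorization_eq_prod_primeFactors]
  exact Finset.prod_congr rfl fun p hp =>
    (hg_primePow p _ (Nat.prime_of_mem_primeFactors hp)
      (Finsupp.mem_support_iff.mp (Nat.support_factorization n ▸ hp))).symm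

lemma prod_primeFactors_one_sub_cpow_neg (s : ℂ) {n : ℕ} (hn : n ≠ 0) :
    ∏ p ∈ n.primeFactors, (1 - (p : ℂ) ^ (-s)) =
      ∑ d ∈ n.divisors, (μ d : ℂ) * (d : ℂ) ^ (-s) := by
  -- patched at `0`, since `(0 : ℂ) ^ (-s) = 1` for `s = 0`
  let f : ArithmeticFunction ℂ := ⟨fun d => if d = 0 then 0 else (d : ℂ) ^ (-s), if_pos rfl⟩
  have hf : f.IsMultiplicative := by
    refine IsMultiplicative.iff_ne_zero.mpr ⟨by simp [f], fun {a b} ha hb _ => ?_⟩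
    simp [f, ha, hb, natCast_mul_natCast_cpow]
  have hf_apply {d : ℕ} (hd : d ≠ 0) : f d = (d : ℂ) ^ (-s) := if_neg hd
  calc ∏ p ∈ n.primeFactors, (1 - (p : ℂ) ^ (-s))
      = ∏ p ∈ n.primeFactors, (1 - f p) := Finset.prod_congr rfl fun p hp => by
        rw [hf_apply (Nat.prime_of_mem_primeFactors hp).ne_zero]
    _ = ∑ d ∈ n.divisors, (μ d : ℂ) * f d := hf.prodPrimeFactors_one_sub hn
    _ = ∑ d ∈ n.divisors, (μ d : ℂ) * (d : ℂ) ^ (-s) := Finset.sum_congr rfl fun d hd => by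
        rw [hf_apply (Nat.pos_of_mem_divisors hd).ne']

lemma LSeries_coprime_indicator (N : ℕ) [NeZero N] {s : ℂ} (hs : 1 < s.re) :
    LSeries (fun n => if n.Coprime N then 1 else 0) s =
      (∏ p ∈ N.primeFactors, (1 - (p : ℂ) ^ (-s))) * riemannZeta s := by
  have hχ : (fun n : ℕ => if n.Coprime N then (1 : ℂ) else 0) =
      fun n : ℕ => (1 : DirichletCharacter ℂ N) n := by
    ext n
    by_cases h : n.Coprime N
    · rw [if_pos h, MulChar.one_apply ((ZMod.isUnit_iff_coprime n N).mpr h)]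
    · rw [if_neg h, MulChar.map_nonunit _ (mt (ZMod.isUnit_iff_coprime n N).mp h)]
  rw [hχ, ← DirichletCharacter.LFunction_eq_LSeries _ hs]
  exact DirichletCharacter.LFunctionTrivChar_eq_mul_riemannZeta fun h => by simp [h] at hs

lemma tsum_coprime_cpow_neg (N : ℕ) [NeZero N] {s : ℂ} (hs : 1 < s.re) :
    ∑' n : ℕ, (if n.Coprime N then (n : ℂ) ^ (-s) else 0) =
      (∏ p ∈ N.primeFactors, (1 - (p : ℂ) ^ (-s))) * riemannZeta s := by
  rw [← LSeries_coprime_indicator N hs]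
  refine tsum_congr fun n => ?_
  rcases eq_or_ne n 0 with rfl | hn
  · have hs0 : -s ≠ 0 := neg_ne_zero.mpr fun h => by norm_num [h] at hs
    simp [zero_cpow hs0]
  · rw [term_of_ne_zero hn, cpow_neg]
    split_ifs <;> simp

lemma LSeries.term_mul_cpow_neg (f : ℕ → ℂ) (s w : ℂ) :
    term (fun n => f n * (n : ℂ) ^ (-s)) w = term f (s + w) := by
  ext n
  rcases eq_or_ne n 0 with rfl | hn
  · simp
  · have : (n : ℂ) ≠ 0 := Nat.cast_ne_zero.mpr hn
    rw [term_of_ne_zero hn, term_of_ne_zero hn, cpow_add _ _ this, cpow_neg]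
    field_simp

lemma LSeries.term_mul_of_coprime {f : ℕ → ℂ}
    (hf : ∀ {m n : ℕ}, m.Coprime n → f (m * n) = f m * f n) (s : ℂ) {m n : ℕ}
    (hmn : m.Coprime n) : term f s (m * n) = term f s m * term f s n := by
  rcases eq_or_ne m 0 with rfl | hm
  · simp
  rcases eq_or_ne n 0 with rfl | hn
  · simp
  rw [term_of_ne_zero (mul_ne_zero hm hn), term_of_ne_zero hm, term_of_ne_zero hn, hf hmn,
    Nat.cast_mul, natCast_mul_natCast_cpow, mul_div_mul_comm]

lemma convolution_odd_apply (f : ℕ → ℂ) (l : ℕ) :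
    ((fun d => if Odd d then f d else 0) ⍟ fun n => if Odd n then 1 else 0) l =
      if Odd l then ∑ d ∈ l.divisors, f d else 0 := by
  have hodd {d : ℕ} (hd : d ∈ l.divisors) : Odd d ∧ Odd (l / d) ↔ Odd l := by
    rw [← Nat.odd_mul, Nat.mul_div_cancel' (Nat.dvd_of_mem_divisors hd)]
  rw [convolution_def]
  dsimp only
  rw [Nat.sum_divisorsAntidiagonal fun d e => (if Odd d then f d else 0) * if Odd e then 1 else 0]
  split_ifs with hl
  · refine Finset.sum_congr rfl fun d hd => ?_
    rw [ite_zero_mul_ite_zero, if_pos ((hodd hd).mpr hl), mul_one]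
  · refine Finset.sum_eq_zero fun d hd => ?_
    rw [ite_zero_mul_ite_zero, if_neg (mt (hodd hd).mp hl)]

lemma LSeriesSummable_odd_moebius {z : ℂ} (hz : 1 < z.re) :
    LSeriesSummable (fun n => if Odd n then (μ n : ℂ) else 0) z := by
  refine LSeriesSummable_of_bounded_of_one_lt_re (m := 1) (fun n _ => ?_) hz
  split_ifs
  · rw [norm_intCast]
    exact_mod_cast abs_moebius_le_one
  · simp

lemma LSeries_odd_moebius {z : ℂ} (hz : 1 < z.re) :
    LSeries (fun n => if Odd n then (μ n : ℂ) else 0) z =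
      ∏' p : {p : ℕ // p.Prime ∧ Odd p}, (1 - (p : ℂ) ^ (-z)) := by
  set c : ℕ → ℂ := fun n => if Odd n then (μ n : ℂ) else 0
  have hc_mul {m n : ℕ} (hmn : m.Coprime n) : c (m * n) = c m * c n := by
    simp only [c, Nat.odd_mul, ite_zero_mul_ite_zero,
      isMultiplicative_moebius.map_mul_of_coprime hmn, Int.cast_mul]
  have hc_one : term c z 1 = 1 := by simp [c]
  have hlocal {p : ℕ} (hp : p.Prime) :
      ∑' e, term c z (p ^ e) = if Odd p then 1 - (p : ℂ) ^ (-z) else 1 := by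
    rw [tsum_eq_sum (s := Finset.range 2) fun e he => ?_]
    · rw [Finset.sum_range_succ, Finset.sum_range_one, pow_zero, pow_one, hc_one,
        term_of_ne_zero hp.ne_zero]
      split_ifs <;> simp [c, *, moebius_apply_prime hp, cpow_neg, sub_eq_add_neg, div_eq_mul_inv]
    · have he : 1 < e := by simpa using he
      rw [term_of_ne_zero (pow_ne_zero _ hp.ne_zero)]
      simp only [c, moebius_apply_prime_pow hp (by omega : e ≠ 0), if_neg (by omega : e ≠ 1),
        Int.cast_zero, ite_self, zero_div]
  have hsum : Summable (‖term c z ·‖) := summable_norm_iff.mpr (LSeriesSummable_odd_moebius hz)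
  rw [LSeries, ← (EulerProduct.eulerProduct_hasProd_mulIndicator hc_one
    (term_mul_of_coprime hc_mul z) hsum (term_zero ..)).tprod_eq]
  refine Eq.trans ?_ (tprod_subtype {p : ℕ | p.Prime ∧ Odd p} fun p => 1 - (p : ℂ) ^ (-z)).symm
  refine tprod_congr fun n => ?_
  by_cases hn : n.Prime
  · simp [Set.mulIndicator, hn, hlocal]
  · simp [Set.mulIndicator, hn]

lemma tsum_odd_cpow_neg_mul_prod_primeFactors {s w : ℂ} (hw : 1 < w.re) (hsw : 1 < (s + w).re) :
    ∑' l : ℕ, (if Odd l then (l : ℂ) ^ (-w) * ∏ p ∈ l.primeFactors, (1 - (p : ℂ) ^ (-s)) else 0) =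
      (∏' p : {p : ℕ // p.Prime ∧ Odd p}, (1 - (p : ℂ) ^ (-(s + w)))) *
        ((1 - 2 ^ (-w)) * riemannZeta w) := by
  set a : ℕ → ℂ := fun d => if Odd d then (μ d : ℂ) * (d : ℂ) ^ (-s) else 0
  set χ : ℕ → ℂ := fun n => if Odd n then 1 else 0
  have ha : term a w = term (fun n => if Odd n then (μ n : ℂ) else 0) (s + w) := by
    simpa only [ite_mul, zero_mul] using
      term_mul_cpow_neg (fun n => if Odd n then (μ n : ℂ) else 0) s w
  have ha_summable : LSeriesSummable a w := by
    unfold LSeriesSummable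
    rw [ha]
    exact LSeriesSummable_odd_moebius hsw
  have hχ_summable : LSeriesSummable χ w :=
    LSeriesSummable_of_bounded_of_one_lt_re (m := 1)
      (fun n _ => by simp only [χ]; split_ifs <;> simp) hw
  have hχ : LSeries χ w = (1 - 2 ^ (-w)) * riemannZeta w := by
    simpa [Nat.prime_two.primeFactors] using LSeries_coprime_indicator 2 hw
  have hterm : (fun l : ℕ => if Odd l then
      (l : ℂ) ^ (-w) * ∏ p ∈ l.primeFactors, (1 - (p : ℂ) ^ (-s)) else 0) = term (a ⍟ χ) w := by
    ext l
    rcases eq_or_ne l 0 with rfl | hl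
    · simp
    rw [term_of_ne_zero hl, convolution_odd_apply, prod_primeFactors_one_sub_cpow_neg s hl,
      cpow_neg]
    split_ifs <;> simp [div_eq_inv_mul]
  rw [hterm]
  change LSeries (a ⍟ χ) w = _
  rw [LSeries_convolution' ha_summable hχ_summable, hχ,
    show LSeries a w = LSeries _ (s + w) from congrArg tsum ha, LSeries_odd_moebius hsw]

theorem sum_square_part_eq_zeta_zeta_P (s w : ℂ) (hs : 1 < s.re) (hw : 1 / 2 < w.re) :
    (∑' l : ℕ, if Odd l then
        (l : ℂ) ^ (-(2 * w)) * ∑' n : ℕ, (if Nat.Coprime n (2 * l) then (n : ℂ) ^ (-s) else 0)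
      else 0) =
      riemannZeta s * riemannZeta (2 * w) * Pfactor s w := by
  have hw2 : 1 < (2 * w).re := by norm_num; linarith
  have hsummand (l : ℕ) : (if Odd l then
      (l : ℂ) ^ (-(2 * w)) * ∑' n : ℕ, (if Nat.Coprime n (2 * l) then (n : ℂ) ^ (-s) else 0)
      else 0) = riemannZeta s * (1 - 2 ^ (-s)) * (if Odd l then
        (l : ℂ) ^ (-(2 * w)) * ∏ p ∈ l.primeFactors, (1 - (p : ℂ) ^ (-s)) else 0) := by
    split_ifs with hl
    · have : NeZero (2 * l) := ⟨mul_ne_zero two_ne_zero hl.pos.ne'⟩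
      rw [tsum_coprime_cpow_neg (2 * l) hs,
        Nat.prod_primeFactors_prime_mul Nat.prime_two hl.not_two_dvd_nat]
      push_cast
      ring
    · simp
  rw [tsum_congr hsummand, tsum_mul_left,
    tsum_odd_cpow_neg_mul_prod_primeFactors hw2 (by rw [add_re]; linarith), Pfactor,
    show -s - 2 * w = -(s + 2 * w) by ring]
  ring
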